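/- The generating function for the number of typical partitions in H'(k,ℓ) by size is t^{kℓ} / (∏_{i=1}^k (1 - t^i) · ∏_{j=1}^ℓ (1 - t^j)), i.e., Σ_n #{λ ⊢ n : λ_{k+1} ≤ ℓ and λ_k ≥ ℓ} t^n equals this product. -/

import Mathlib

/-- A partition, recorded by its (0-indexed) parts: `parts i` is the
`(i+1)`-st part `λ_{i+1}`. -/
structure PartsPartition where
  parts : ℕ →₀ ℕ
  antitone : ∀ ⦃i j : ℕ⦄, i ≤ j → parts j ≤ parts i

/-- The size `|λ|` of a partition: the sum of its parts. -/
def psize (lam : PartsPartition) : ℕ := lam.parts.sum fun _ m => m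

/-- The conjugate partition: `pconj lam j` is the `(j+1)`-st part `λ'_{j+1}`
of the conjugate, i.e. the number of parts of `λ` that are `> j`. -/
def pconj (lam : PartsPartition) (j : ℕ) : ℕ :=
  (lam.parts.support.filter fun i => j < lam.parts i).card

namespace PartitionAux

theorem PartsPartition.ext' {a b : PartsPartition} (h : a.parts = b.parts) : a = b := by
  cases a; cases b; simpa using h

/-- Build a partition from a function vanishing from `N` on. -/
noncomputable def ofFun (f : ℕ → ℕ) (N : ℕ) (hN : ∀ i, N ≤ i → f i = 0)
    (ha : ∀ ⦃i j : ℕ⦄, i ≤ j → f j ≤ f i) : PartsPartition :=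
  ⟨Finsupp.onFinset (Finset.range N) f
    (fun a ha' => Finset.mem_range.2 (by by_contra h; exact ha' (hN a (not_lt.1 h)))), ha⟩

@[simp] theorem ofFun_parts (f : ℕ → ℕ) (N : ℕ) (hN) (ha) (i : ℕ) :
    (ofFun f N hN ha).parts i = f i := rfl

theorem parts_eq_zero_of_le {lam : PartsPartition} {N i : ℕ} (h : lam.parts N = 0) (hNi : N ≤ i) :
    lam.parts i = 0 := le_antisymm (h ▸ lam.antitone hNi) (Nat.zero_le _)

theorem psize_eq_sum {lam : PartsPartition} {N : ℕ} (h : lam.parts N = 0) :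
    psize lam = ∑ i ∈ Finset.range N, lam.parts i := by
  have hsub : lam.parts.support ⊆ Finset.range N := by
    intro i hi
    rw [Finsupp.mem_support_iff] at hi
    rw [Finset.mem_range]
    by_contra hc
    exact hi (parts_eq_zero_of_le h (not_lt.1 hc))
  exact Finsupp.sum_of_support_subset _ hsub _ (fun i _ => rfl)

theorem lt_psize_of_parts_ne_zero {lam : PartsPartition} {i : ℕ} (h : lam.parts i ≠ 0) :
    i < psize lam := by
  have h1 : ∀ j ∈ Finset.range (i+1), 1 ≤ lam.parts j := by
    intro j hj
    rw [Finset.mem_range, Nat.lt_succ_iff] at hj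
    exact Nat.one_le_iff_ne_zero.2 (fun h0 => h (parts_eq_zero_of_le h0 hj))
  have hsub : Finset.range (i+1) ⊆ lam.parts.support := by
    intro j hj
    exact Finsupp.mem_support_iff.2 (Nat.one_le_iff_ne_zero.1 (h1 j hj))
  calc i < i + 1 := Nat.lt_succ_self i
    _ = ∑ j ∈ Finset.range (i+1), 1 := by simp
    _ ≤ ∑ j ∈ Finset.range (i+1), lam.parts j := Finset.sum_le_sum h1
    _ ≤ ∑ j ∈ lam.parts.support, lam.parts j :=
        Finset.sum_le_sum_of_subset_of_nonneg hsub (by intros; exact Nat.zero_le _)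
    _ = psize lam := rfl

theorem parts_psize {lam : PartsPartition} : lam.parts (psize lam) = 0 := by
  by_contra h
  exact absurd (lt_psize_of_parts_ne_zero h) (lt_irrefl _)

theorem parts_eq_zero_of_psize_le {lam : PartsPartition} {i : ℕ} (h : psize lam ≤ i) :
    lam.parts i = 0 := parts_eq_zero_of_le parts_psize h

theorem parts_le_psize (lam : PartsPartition) (i : ℕ) : lam.parts i ≤ psize lam := by
  by_cases h : lam.parts i = 0
  · simp [h]
  · calc lam.parts i ≤ ∑ j ∈ lam.parts.support, lam.parts j :=
        Finset.single_le_sum (fun j _ => Nat.zero_le _) (Finsupp.mem_support_iff.2 h)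
      _ = psize lam := rfl

instance finite_sized (n : ℕ) : Finite {lam : PartsPartition // psize lam = n} := by
  apply Finite.of_injective (f := fun lam : {lam : PartsPartition // psize lam = n} =>
    (fun i : Fin n => (⟨lam.1.parts i, Nat.lt_succ_of_le (le_of_le_of_eq (parts_le_psize lam.1 i) lam.2)⟩ : Fin (n+1))))
  rintro ⟨a, ha⟩ ⟨b, hb⟩ hab
  simp only [Subtype.mk.injEq]
  apply PartsPartition.ext'
  ext i
  by_cases hi : i < n
  · have := congrFun hab ⟨i, hi⟩
    simpa using this
  · rw [parts_eq_zero_of_psize_le (ha ▸ not_lt.1 hi),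
      parts_eq_zero_of_psize_le (hb ▸ not_lt.1 hi)]

instance finite_cond (n : ℕ) (P : PartsPartition → Prop) : Finite {lam : PartsPartition // psize lam = n ∧ P lam} :=
  Finite.of_injective (f := fun x : {lam : PartsPartition // psize lam = n ∧ P lam} =>
    (⟨x.1, x.2.1⟩ : {lam : PartsPartition // psize lam = n}))
    (fun a b h => Subtype.ext (by injection h))



/-- The empty partition. -/
def pzero : PartsPartition := ⟨0, fun _ _ _ => le_rfl⟩

@[simp] theorem pzero_parts (i : ℕ) : pzero.parts i = 0 := rfl

@[simp] theorem psize_pzero : psize pzero = 0 := rfl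

theorem eq_pzero_of_parts_zero {lam : PartsPartition} (h : lam.parts 0 = 0) : lam = pzero :=
  PartsPartition.ext' (by ext i; simpa using parts_eq_zero_of_le h (Nat.zero_le i))

/-- Remove the first part. -/
noncomputable def shift (lam : PartsPartition) : PartsPartition :=
  ofFun (fun i => lam.parts (i + 1)) (psize lam)
    (fun i hi => parts_eq_zero_of_psize_le (le_trans hi (Nat.le_succ i)))
    (fun i j h => lam.antitone (Nat.succ_le_succ h))

@[simp] theorem shift_parts (lam : PartsPartition) (i : ℕ) :
    (shift lam).parts i = lam.parts (i + 1) := rfl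

theorem psize_shift (lam : PartsPartition) : lam.parts 0 + psize (shift lam) = psize lam := by
  have h1 : (shift lam).parts (psize lam) = 0 := by
    rw [shift_parts]; exact parts_eq_zero_of_psize_le (Nat.le_succ _)
  have e1 := psize_eq_sum h1
  simp only [shift_parts] at e1
  have e2 := psize_eq_sum (lam := lam) (N := psize lam + 1)
    (parts_eq_zero_of_psize_le (Nat.le_succ _))
  rw [Finset.sum_range_succ'] at e2
  omega

/-- Prepend a part `a` at least as large as the first part. -/
noncomputable def cons (a : ℕ) (nu : PartsPartition) (h : nu.parts 0 ≤ a) : PartsPartition :=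
  ofFun (fun i => match i with | 0 => a | (j+1) => nu.parts j) (psize nu + 1)
    (by rintro (_|i) hi
        · omega
        · exact parts_eq_zero_of_psize_le (by omega))
    (by rintro (_|i) (_|j) hij
        · exact le_rfl
        · exact le_trans (nu.antitone (Nat.zero_le _)) h
        · omega
        · exact nu.antitone (by omega))

@[simp] theorem cons_parts_zero (a : ℕ) (nu : PartsPartition) (h) : (cons a nu h).parts 0 = a := rfl

@[simp] theorem cons_parts_succ (a : ℕ) (nu : PartsPartition) (h) (i : ℕ) :
    (cons a nu h).parts (i + 1) = nu.parts i := rfl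

theorem psize_cons (a : ℕ) (nu : PartsPartition) (h) : psize (cons a nu h) = a + psize nu := by
  have h1 : (cons a nu h).parts (psize nu + 1) = 0 := by
    rw [cons_parts_succ]; exact parts_psize
  have e1 := psize_eq_sum h1
  rw [Finset.sum_range_succ'] at e1
  simp only [cons_parts_succ, cons_parts_zero] at e1
  have e2 := psize_eq_sum (parts_psize (lam := nu))
  omega

/-- The shift/cons equivalence for the largest-part recurrence. -/
noncomputable def equivShift (l n : ℕ) :
    {lam : PartsPartition // psize lam = n ∧ lam.parts 0 ≤ l + 1 ∧ ¬ lam.parts 0 ≤ l} ≃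
    {nu : PartsPartition // psize nu + (l + 1) = n ∧ nu.parts 0 ≤ l + 1} where
  toFun x := ⟨shift x.1, by
    obtain ⟨hs, h1, h2⟩ := x.2
    have hx : x.1.parts 0 = l + 1 := by omega
    constructor
    · have := psize_shift x.1; omega
    · simp only [shift_parts]; exact le_trans (x.1.antitone (by omega)) h1⟩
  invFun y := ⟨cons (l + 1) y.1 y.2.2, by
    refine ⟨?_, by simp, by simp⟩
    rw [psize_cons]; omega⟩
  left_inv x := by
    obtain ⟨lam, hs, h1, h2⟩ := x
    apply Subtype.ext
    apply PartsPartition.ext'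
    ext i
    cases i with
    | zero => simp only [cons_parts_zero]; omega
    | succ j => simp
  right_inv y := by
    apply Subtype.ext
    apply PartsPartition.ext'
    ext i
    simp

/-- Subtract 1 from every (nonzero) part. -/
noncomputable def sub1 (lam : PartsPartition) : PartsPartition :=
  ofFun (fun i => lam.parts i - 1) (psize lam)
    (fun i hi => by show lam.parts i - 1 = 0; rw [parts_eq_zero_of_psize_le hi])
    (fun i j h => Nat.sub_le_sub_right (lam.antitone h) 1)

@[simp] theorem sub1_parts (lam : PartsPartition) (i : ℕ) : (sub1 lam).parts i = lam.parts i - 1 := rfl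

/-- Add 1 to each of the first `k+1` parts. -/
noncomputable def add1 (k : ℕ) (mu : PartsPartition) : PartsPartition :=
  ofFun (fun i => if i ≤ k then mu.parts i + 1 else 0) (k + 1)
    (fun i hi => by show (if i ≤ k then mu.parts i + 1 else 0) = 0; rw [if_neg (by omega)])
    (by intro i j hij
        show (if j ≤ k then mu.parts j + 1 else 0) ≤ (if i ≤ k then mu.parts i + 1 else 0)
        by_cases hj : j ≤ k
        · rw [if_pos hj, if_pos (le_trans hij hj)]
          exact Nat.add_le_add_right (mu.antitone hij) 1
        · rw [if_neg hj]; exact Nat.zero_le _)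

@[simp] theorem add1_parts (k : ℕ) (mu : PartsPartition) (i : ℕ) :
    (add1 k mu).parts i = if i ≤ k then mu.parts i + 1 else 0 := rfl

theorem psize_sub1 {lam : PartsPartition} {k : ℕ} (h0 : lam.parts (k + 1) = 0)
    (h1 : lam.parts k ≠ 0) : psize (sub1 lam) + (k + 1) = psize lam := by
  have hz : (sub1 lam).parts (k + 1) = 0 := by rw [sub1_parts, h0]
  rw [psize_eq_sum hz, psize_eq_sum h0]
  have hge : ∀ i ∈ Finset.range (k + 1), 1 ≤ lam.parts i := fun i hi =>
    Nat.one_le_iff_ne_zero.2 (fun hc => h1 (parts_eq_zero_of_le hc (by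
      simp only [Finset.mem_range] at hi; omega)))
  simp only [sub1_parts]
  calc (∑ i ∈ Finset.range (k + 1), (lam.parts i - 1)) + (k + 1)
      = ∑ i ∈ Finset.range (k + 1), (lam.parts i - 1 + 1) := by
        rw [Finset.sum_add_distrib]; simp
    _ = ∑ i ∈ Finset.range (k + 1), lam.parts i :=
        Finset.sum_congr rfl (fun i hi => by have := hge i hi; omega)

theorem psize_add1 {mu : PartsPartition} {k : ℕ} (h0 : mu.parts (k + 1) = 0) :
    psize (add1 k mu) = psize mu + (k + 1) := by
  have hz : (add1 k mu).parts (k + 1) = 0 := by rw [add1_parts, if_neg (by omega)]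
  rw [psize_eq_sum hz, psize_eq_sum h0]
  have : ∀ i ∈ Finset.range (k + 1), (add1 k mu).parts i = mu.parts i + 1 := by
    intro i hi
    simp only [Finset.mem_range] at hi
    rw [add1_parts, if_pos (by omega)]
  rw [Finset.sum_congr rfl this, Finset.sum_add_distrib]
  simp

/-- The subtract/add-one equivalence for the number-of-parts recurrence. -/
noncomputable def equivSub (k n : ℕ) :
    {lam : PartsPartition // psize lam = n ∧ lam.parts (k + 1) = 0 ∧ ¬ lam.parts k = 0} ≃
    {mu : PartsPartition // psize mu + (k + 1) = n ∧ mu.parts (k + 1) = 0} where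
  toFun x := ⟨sub1 x.1, by
    obtain ⟨hs, h0, h1⟩ := x.2
    exact ⟨by rw [psize_sub1 h0 h1, hs], by rw [sub1_parts, h0]⟩⟩
  invFun y := ⟨add1 k y.1, by
    obtain ⟨hs, h0⟩ := y.2
    refine ⟨by rw [psize_add1 h0]; omega, ?_, ?_⟩
    · rw [add1_parts, if_neg (by omega)]
    · rw [add1_parts, if_pos le_rfl]; omega⟩
  left_inv x := by
    obtain ⟨lam, hs, h0, h1⟩ := x
    apply Subtype.ext
    apply PartsPartition.ext'
    ext i
    simp only [add1_parts, sub1_parts]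
    by_cases hi : i ≤ k
    · rw [if_pos hi]
      have : 1 ≤ lam.parts i :=
        Nat.one_le_iff_ne_zero.2 (fun hc => h1 (parts_eq_zero_of_le hc hi))
      omega
    · rw [if_neg hi, parts_eq_zero_of_le h0 (by omega)]
  right_inv y := by
    obtain ⟨mu, hs, h0⟩ := y
    apply Subtype.ext
    apply PartsPartition.ext'
    ext i
    simp only [sub1_parts, add1_parts]
    by_cases hi : i ≤ k
    · rw [if_pos hi]; omega
    · rw [if_neg hi, parts_eq_zero_of_le h0 (by omega)]


theorem card_split (n : ℕ) (P Q : PartsPartition → Prop) :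
    Nat.card {lam : PartsPartition // psize lam = n ∧ P lam} =
      Nat.card {lam : PartsPartition // psize lam = n ∧ P lam ∧ Q lam} +
      Nat.card {lam : PartsPartition // psize lam = n ∧ P lam ∧ ¬ Q lam} := by
  classical
  have e1 : {lam : PartsPartition // psize lam = n ∧ P lam} ≃
      {x : {lam : PartsPartition // psize lam = n ∧ P lam} // Q x.1} ⊕
      {x : {lam : PartsPartition // psize lam = n ∧ P lam} // ¬ Q x.1} :=
    (Equiv.sumCompl _).symm
  rw [Nat.card_congr e1, Nat.card_sum]
  congr 1
  · exact Nat.card_congr ⟨fun x => ⟨x.1.1, x.1.2.1, x.1.2.2, x.2⟩,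
      fun y => ⟨⟨y.1, y.2.1, y.2.2.1⟩, y.2.2.2⟩, fun x => rfl, fun y => rfl⟩
  · exact Nat.card_congr ⟨fun x => ⟨x.1.1, x.1.2.1, x.1.2.2, x.2⟩,
      fun y => ⟨⟨y.1, y.2.1, y.2.2.1⟩, y.2.2.2⟩, fun x => rfl, fun y => rfl⟩

theorem card_base (n : ℕ) :
    Nat.card {lam : PartsPartition // psize lam = n ∧ lam.parts 0 = 0} =
      if n = 0 then 1 else 0 := by
  split
  · next h =>
    subst h
    haveI : Unique {lam : PartsPartition // psize lam = 0 ∧ lam.parts 0 = 0} :=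
      { default := ⟨pzero, rfl, rfl⟩
        uniq := fun x => Subtype.ext (eq_pzero_of_parts_zero x.2.2) }
    exact Nat.card_unique
  · next h =>
    haveI : IsEmpty {lam : PartsPartition // psize lam = n ∧ lam.parts 0 = 0} :=
      ⟨fun x => h (by rw [← x.2.1, psize_eq_sum x.2.2]; simp)⟩
    exact Nat.card_of_isEmpty

theorem cardB_rec (l n : ℕ) :
    Nat.card {lam : PartsPartition // psize lam = n ∧ lam.parts 0 ≤ l + 1} =
      Nat.card {lam : PartsPartition // psize lam = n ∧ lam.parts 0 ≤ l} +
      Nat.card {nu : PartsPartition // psize nu + (l + 1) = n ∧ nu.parts 0 ≤ l + 1} := by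
  rw [card_split n (fun lam => lam.parts 0 ≤ l + 1) (fun lam => lam.parts 0 ≤ l)]
  congr 1
  · exact Nat.card_congr (Equiv.subtypeEquivRight (fun lam => by omega))
  · exact Nat.card_congr (equivShift l n)

theorem cardA_rec (k n : ℕ) :
    Nat.card {lam : PartsPartition // psize lam = n ∧ lam.parts (k + 1) = 0} =
      Nat.card {lam : PartsPartition // psize lam = n ∧ lam.parts k = 0} +
      Nat.card {mu : PartsPartition // psize mu + (k + 1) = n ∧ mu.parts (k + 1) = 0} := by
  rw [card_split n (fun lam => lam.parts (k + 1) = 0) (fun lam => lam.parts k = 0)]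
  congr 1
  · refine Nat.card_congr (Equiv.subtypeEquivRight (fun lam => ?_))
    constructor
    · rintro ⟨h1, h2, h3⟩; exact ⟨h1, h3⟩
    · rintro ⟨h1, h2⟩; exact ⟨h1, parts_eq_zero_of_le h2 (Nat.le_succ k), h2⟩
  · exact Nat.card_congr (equivSub k n)

open PowerSeries

/-- Count of partitions of `n` with largest part at most `l`. -/
noncomputable def cB (l n : ℕ) : ℚ :=
  Nat.card {lam : PartsPartition // psize lam = n ∧ lam.parts 0 ≤ l}

/-- Count of partitions of `n` with at most `k` parts. -/
noncomputable def cA (k n : ℕ) : ℚ :=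
  Nat.card {lam : PartsPartition // psize lam = n ∧ lam.parts k = 0}

theorem mk_cB_rec (l : ℕ) :
    PowerSeries.mk (cB (l + 1)) * (1 - (X : PowerSeries ℚ) ^ (l + 1)) =
      PowerSeries.mk (cB l) := by
  ext n
  rw [mul_sub, mul_one, map_sub, coeff_mk, PowerSeries.coeff_mul_X_pow']
  simp only [coeff_mk]
  have h2 : Nat.card {nu : PartsPartition // psize nu + (l + 1) = n ∧ nu.parts 0 ≤ l + 1}
      = if l + 1 ≤ n then
          Nat.card {nu : PartsPartition // psize nu = n - (l + 1) ∧ nu.parts 0 ≤ l + 1}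
        else 0 := by
    split
    · next h => exact Nat.card_congr (Equiv.subtypeEquivRight (fun nu => by omega))
    · next h =>
      haveI : IsEmpty {nu : PartsPartition // psize nu + (l + 1) = n ∧ nu.parts 0 ≤ l + 1} :=
        ⟨fun x => absurd x.2.1 (by omega)⟩
      exact Nat.card_of_isEmpty
  have h1 := cardB_rec l n
  rw [h2] at h1
  simp only [cB]
  rw [h1]
  split_ifs with h <;> push_cast <;> ring

theorem mk_cA_rec (k : ℕ) :
    PowerSeries.mk (cA (k + 1)) * (1 - (X : PowerSeries ℚ) ^ (k + 1)) =
      PowerSeries.mk (cA k) := by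
  ext n
  rw [mul_sub, mul_one, map_sub, coeff_mk, PowerSeries.coeff_mul_X_pow']
  simp only [coeff_mk]
  have h2 : Nat.card {mu : PartsPartition // psize mu + (k + 1) = n ∧ mu.parts (k + 1) = 0}
      = if k + 1 ≤ n then
          Nat.card {mu : PartsPartition // psize mu = n - (k + 1) ∧ mu.parts (k + 1) = 0}
        else 0 := by
    split
    · next h => exact Nat.card_congr (Equiv.subtypeEquivRight (fun mu => by omega))
    · next h =>
      haveI : IsEmpty {mu : PartsPartition // psize mu + (k + 1) = n ∧ mu.parts (k + 1) = 0} :=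
        ⟨fun x => absurd x.2.1 (by omega)⟩
      exact Nat.card_of_isEmpty
  have h1 := cardA_rec k n
  rw [h2] at h1
  simp only [cA]
  rw [h1]
  split_ifs with h <;> push_cast <;> ring

theorem mk_cB_prod (l : ℕ) :
    PowerSeries.mk (cB l) * ∏ j ∈ Finset.range l, (1 - (X : PowerSeries ℚ) ^ (j + 1)) = 1 := by
  induction l with
  | zero =>
    rw [Finset.range_zero, Finset.prod_empty, mul_one]
    ext n
    rw [coeff_mk, PowerSeries.coeff_one]
    simp only [cB]
    have e : {lam : PartsPartition // psize lam = n ∧ lam.parts 0 ≤ 0} ≃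
        {lam : PartsPartition // psize lam = n ∧ lam.parts 0 = 0} :=
      Equiv.subtypeEquivRight (fun lam => by simp [Nat.le_zero])
    rw [Nat.card_congr e, card_base]
    split_ifs <;> simp
  | succ l ih =>
    rw [Finset.prod_range_succ]
    calc PowerSeries.mk (cB (l + 1)) *
        ((∏ j ∈ Finset.range l, (1 - (X : PowerSeries ℚ) ^ (j + 1))) * (1 - X ^ (l + 1)))
        = (PowerSeries.mk (cB (l + 1)) * (1 - X ^ (l + 1))) *
            ∏ j ∈ Finset.range l, (1 - (X : PowerSeries ℚ) ^ (j + 1)) := by ring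
      _ = PowerSeries.mk (cB l) * ∏ j ∈ Finset.range l, (1 - (X : PowerSeries ℚ) ^ (j + 1)) := by
          rw [mk_cB_rec]
      _ = 1 := ih

theorem mk_cA_prod (k : ℕ) :
    PowerSeries.mk (cA k) * ∏ i ∈ Finset.range k, (1 - (X : PowerSeries ℚ) ^ (i + 1)) = 1 := by
  induction k with
  | zero =>
    rw [Finset.range_zero, Finset.prod_empty, mul_one]
    ext n
    rw [coeff_mk, PowerSeries.coeff_one]
    simp only [cA]
    rw [card_base]
    split_ifs <;> simp
  | succ k ih =>
    rw [Finset.prod_range_succ]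
    calc PowerSeries.mk (cA (k + 1)) *
        ((∏ i ∈ Finset.range k, (1 - (X : PowerSeries ℚ) ^ (i + 1))) * (1 - X ^ (k + 1)))
        = (PowerSeries.mk (cA (k + 1)) * (1 - X ^ (k + 1))) *
            ∏ i ∈ Finset.range k, (1 - (X : PowerSeries ℚ) ^ (i + 1)) := by ring
      _ = PowerSeries.mk (cA k) * ∏ i ∈ Finset.range k, (1 - (X : PowerSeries ℚ) ^ (i + 1)) := by
          rw [mk_cA_rec]
      _ = 1 := ih


theorem card_sigma' {ι : Type*} [Fintype ι] (f : ι → Type*) [∀ i, Finite (f i)] :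
    Nat.card ((i : ι) × f i) = ∑ i, Nat.card (f i) := by
  letI := fun i => Fintype.ofFinite (f i)
  simp only [Nat.card_eq_fintype_card]
  exact Fintype.card_sigma

theorem card_pairs (k l m : ℕ) :
    Nat.card {p : PartsPartition × PartsPartition //
        psize p.1 + psize p.2 = m ∧ p.1.parts k = 0 ∧ p.2.parts 0 ≤ l} =
      ∑ ab ∈ Finset.HasAntidiagonal.antidiagonal m,
        Nat.card {mu : PartsPartition // psize mu = ab.1 ∧ mu.parts k = 0} *
        Nat.card {nu : PartsPartition // psize nu = ab.2 ∧ nu.parts 0 ≤ l} := by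
  classical
  have e : {p : PartsPartition × PartsPartition //
        psize p.1 + psize p.2 = m ∧ p.1.parts k = 0 ∧ p.2.parts 0 ≤ l} ≃
      Σ ab : (Finset.HasAntidiagonal.antidiagonal m : Finset (ℕ × ℕ)),
        ({mu : PartsPartition // psize mu = ab.1.1 ∧ mu.parts k = 0} ×
         {nu : PartsPartition // psize nu = ab.1.2 ∧ nu.parts 0 ≤ l}) :=
    { toFun := fun x => ⟨⟨(psize x.1.1, psize x.1.2), Finset.HasAntidiagonal.mem_antidiagonal.2 x.2.1⟩,
        ⟨⟨x.1.1, rfl, x.2.2.1⟩, ⟨x.1.2, rfl, x.2.2.2⟩⟩⟩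
      invFun := fun y => ⟨(y.2.1.1, y.2.2.1), by
        have hm := Finset.HasAntidiagonal.mem_antidiagonal.1 y.1.2
        exact ⟨by rw [y.2.1.2.1, y.2.2.2.1]; exact hm, y.2.1.2.2, y.2.2.2.2⟩⟩
      left_inv := fun x => rfl
      right_inv := fun y => by
        obtain ⟨⟨⟨a, b⟩, hab⟩, ⟨⟨mu, hmu1, hmu2⟩, ⟨nu, hnu1, hnu2⟩⟩⟩ := y
        have h1' : psize mu = a := hmu1
        have h2' : psize nu = b := hnu1
        subst h1'; subst h2'
        rfl }
  rw [Nat.card_congr e, card_sigma']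
  rw [← Finset.sum_coe_sort (Finset.HasAntidiagonal.antidiagonal m)
    (fun ab => Nat.card {mu : PartsPartition // psize mu = ab.1 ∧ mu.parts k = 0} *
        Nat.card {nu : PartsPartition // psize nu = ab.2 ∧ nu.parts 0 ≤ l})]
  exact Finset.sum_congr rfl (fun ab _ => Nat.card_prod _ _)

/-- Subtract `l` from every part. -/
noncomputable def subl (l : ℕ) (lam : PartsPartition) : PartsPartition :=
  ofFun (fun i => lam.parts i - l) (psize lam)
    (fun i hi => by show lam.parts i - l = 0; rw [parts_eq_zero_of_psize_le hi]; simp)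
    (fun i j h => Nat.sub_le_sub_right (lam.antitone h) l)

@[simp] theorem subl_parts (l : ℕ) (lam : PartsPartition) (i : ℕ) :
    (subl l lam).parts i = lam.parts i - l := rfl

/-- Drop the first `k` parts. -/
noncomputable def dropk (k : ℕ) (lam : PartsPartition) : PartsPartition :=
  ofFun (fun i => lam.parts (k + i)) (psize lam)
    (fun i hi => parts_eq_zero_of_psize_le (le_trans hi (Nat.le_add_left i k)))
    (fun i j h => lam.antitone (by omega))

@[simp] theorem dropk_parts (k : ℕ) (lam : PartsPartition) (i : ℕ) :
    (dropk k lam).parts i = lam.parts (k + i) := rfl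

/-- Glue a `k`-part partition (shifted up by `l`) with a partition with parts `≤ l`. -/
noncomputable def glue (k l : ℕ) (mu nu : PartsPartition) (hnu : nu.parts 0 ≤ l) : PartsPartition :=
  ofFun (fun i => if i < k then mu.parts i + l else nu.parts (i - k)) (k + psize nu)
    (fun i hi => by
      show (if i < k then mu.parts i + l else nu.parts (i - k)) = 0
      rw [if_neg (by omega)]
      exact parts_eq_zero_of_psize_le (by omega))
    (by intro i j hij
        show (if j < k then mu.parts j + l else nu.parts (j - k)) ≤
          (if i < k then mu.parts i + l else nu.parts (i - k))
        by_cases hj : j < k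
        · rw [if_pos hj, if_pos (lt_of_le_of_lt hij hj)]
          exact Nat.add_le_add_right (mu.antitone hij) l
        · rw [if_neg hj]
          by_cases hi : i < k
          · rw [if_pos hi]
            exact le_trans (le_trans (nu.antitone (Nat.zero_le _)) hnu) (Nat.le_add_left l _)
          · rw [if_neg hi]; exact nu.antitone (by omega))

@[simp] theorem glue_parts (k l : ℕ) (mu nu : PartsPartition) (hnu) (i : ℕ) :
    (glue k l mu nu hnu).parts i = if i < k then mu.parts i + l else nu.parts (i - k) := rfl

theorem psize_glue {k l : ℕ} (hk : 1 ≤ k) (mu nu : PartsPartition) (hmu : mu.parts k = 0) (hnu) :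
    psize (glue k l mu nu hnu) = psize mu + psize nu + k * l := by
  have hz : (glue k l mu nu hnu).parts (k + psize nu) = 0 := by
    rw [glue_parts, if_neg (by omega)]
    exact parts_eq_zero_of_psize_le (by omega)
  rw [psize_eq_sum hz, Finset.sum_range_add]
  have e1 : ∑ i ∈ Finset.range k, (glue k l mu nu hnu).parts i
      = ∑ i ∈ Finset.range k, (mu.parts i + l) := by
    refine Finset.sum_congr rfl (fun i hi => ?_)
    rw [glue_parts, if_pos (Finset.mem_range.1 hi)]
  have e2 : ∑ i ∈ Finset.range (psize nu), (glue k l mu nu hnu).parts (k + i)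
      = ∑ i ∈ Finset.range (psize nu), nu.parts i := by
    refine Finset.sum_congr rfl (fun i hi => ?_)
    rw [glue_parts, if_neg (by omega)]
    congr 1
    omega
  rw [e1, e2, Finset.sum_add_distrib, ← psize_eq_sum hmu, ← psize_eq_sum parts_psize,
    Finset.sum_const, Finset.card_range, smul_eq_mul]
  ring

theorem psize_split {k l : ℕ} (hk : 1 ≤ k) (lam : PartsPartition)
    (h1 : lam.parts k ≤ l) (h2 : l ≤ lam.parts (k - 1)) :
    psize (subl l lam) + psize (dropk k lam) + k * l = psize lam := by
  have hz : lam.parts (k + psize lam) = 0 := parts_eq_zero_of_psize_le (by omega)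
  have etot : psize lam = ∑ i ∈ Finset.range (k + psize lam), lam.parts i := psize_eq_sum hz
  rw [Finset.sum_range_add] at etot
  have eν : psize (dropk k lam) = ∑ i ∈ Finset.range (psize lam), lam.parts (k + i) := by
    have hz2 : (dropk k lam).parts (psize lam) = 0 := by
      rw [dropk_parts]; exact parts_eq_zero_of_psize_le (by omega)
    rw [psize_eq_sum hz2]
    exact Finset.sum_congr rfl (fun i _ => rfl)
  have hzμ : (subl l lam).parts k = 0 := by rw [subl_parts]; omega
  have eμ : psize (subl l lam) = ∑ i ∈ Finset.range k, (lam.parts i - l) := by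
    rw [psize_eq_sum hzμ]
    exact Finset.sum_congr rfl (fun i _ => rfl)
  have hge : ∀ i ∈ Finset.range k, l ≤ lam.parts i := by
    intro i hi
    exact le_trans h2 (lam.antitone (by have := Finset.mem_range.1 hi; omega))
  have e3 : ∑ i ∈ Finset.range k, lam.parts i
      = (∑ i ∈ Finset.range k, (lam.parts i - l)) + k * l := by
    calc ∑ i ∈ Finset.range k, lam.parts i
        = ∑ i ∈ Finset.range k, ((lam.parts i - l) + l) :=
          Finset.sum_congr rfl (fun i hi => by have := hge i hi; omega)
      _ = (∑ i ∈ Finset.range k, (lam.parts i - l)) + ∑ i ∈ Finset.range k, l :=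
          Finset.sum_add_distrib
      _ = (∑ i ∈ Finset.range k, (lam.parts i - l)) + k * l := by
          rw [Finset.sum_const, Finset.card_range, smul_eq_mul, mul_comm]
  omega

/-- The main bijection: typical partitions correspond to pairs. -/
noncomputable def equivMain (k l n : ℕ) (hk : 1 ≤ k) (hl : 1 ≤ l) :
    {lam : PartsPartition // psize lam = n ∧ lam.parts k ≤ l ∧ l ≤ lam.parts (k - 1)} ≃
    {p : PartsPartition × PartsPartition //
      (psize p.1 + psize p.2) + k * l = n ∧ p.1.parts k = 0 ∧ p.2.parts 0 ≤ l} where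
  toFun x := ⟨(subl l x.1, dropk k x.1), by
    obtain ⟨hs, h1, h2⟩ := x.2
    refine ⟨?_, by rw [subl_parts]; omega, by rw [dropk_parts]; simpa using h1⟩
    show psize (subl l x.1) + psize (dropk k x.1) + k * l = n
    rw [psize_split hk x.1 h1 h2]
    exact hs⟩
  invFun y := ⟨glue k l y.1.1 y.1.2 y.2.2.2, by
    obtain ⟨hs, hmu, hnu⟩ := y.2
    refine ⟨?_, ?_, ?_⟩
    · rw [psize_glue hk _ _ hmu]; omega
    · rw [glue_parts, if_neg (by omega)]
      simpa using hnu
    · rw [glue_parts, if_pos (by omega)]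
      omega⟩
  left_inv x := by
    obtain ⟨lam, hs, h1, h2⟩ := x
    apply Subtype.ext
    apply PartsPartition.ext'
    ext i
    simp only [glue_parts, subl_parts, dropk_parts]
    by_cases hi : i < k
    · rw [if_pos hi]
      have hge : l ≤ lam.parts i := le_trans h2 (lam.antitone (by omega))
      omega
    · rw [if_neg hi]
      congr 1
      omega
  right_inv y := by
    obtain ⟨⟨mu, nu⟩, hs, hmu, hnu⟩ := y
    apply Subtype.ext
    apply Prod.ext
    · apply PartsPartition.ext'
      ext i
      simp only [subl_parts, glue_parts]
      by_cases hi : i < k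
      · rw [if_pos hi]; omega
      · rw [if_neg hi]
        have e1 : mu.parts i = 0 := parts_eq_zero_of_le hmu (by omega)
        have e2 : nu.parts (i - k) ≤ l := le_trans (nu.antitone (Nat.zero_le _)) hnu
        omega
    · apply PartsPartition.ext'
      ext i
      simp only [dropk_parts, glue_parts]
      rw [if_neg (by omega)]
      congr 1
      omega

end PartitionAux

open PowerSeries

/-- The generating function for typical partitions in `H'(k,ℓ)` by size is
`t^{kℓ} / (∏_{i=1}^k (1-t^i) ∏_{j=1}^ℓ (1-t^j))`. -/
theorem typical_generating_function (k l : ℕ) (hk : 1 ≤ k) (hl : 1 ≤ l) :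
    (PowerSeries.mk fun n =>
        (Nat.card {lam : PartsPartition //
            psize lam = n ∧ lam.parts k ≤ l ∧ l ≤ lam.parts (k - 1)} : ℚ)) *
        (∏ i ∈ Finset.range k, (1 - (X : PowerSeries ℚ) ^ (i + 1))) *
        (∏ j ∈ Finset.range l, (1 - (X : PowerSeries ℚ) ^ (j + 1))) =
      (X : PowerSeries ℚ) ^ (k * l) := by
  classical
  have key : (PowerSeries.mk fun n =>
        (Nat.card {lam : PartsPartition //
            psize lam = n ∧ lam.parts k ≤ l ∧ l ≤ lam.parts (k - 1)} : ℚ)) =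
      (X : PowerSeries ℚ) ^ (k * l) *
        (PowerSeries.mk (PartitionAux.cA k) * PowerSeries.mk (PartitionAux.cB l)) := by
    ext n
    rw [coeff_mk, PowerSeries.coeff_X_pow_mul']
    have hcard := Nat.card_congr (PartitionAux.equivMain k l n hk hl)
    by_cases h : k * l ≤ n
    · rw [if_pos h, PowerSeries.coeff_mul]
      simp only [coeff_mk]
      rw [hcard]
      have e2 : Nat.card {p : PartsPartition × PartsPartition //
            (psize p.1 + psize p.2) + k * l = n ∧ p.1.parts k = 0 ∧ p.2.parts 0 ≤ l} =
          Nat.card {p : PartsPartition × PartsPartition //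
            psize p.1 + psize p.2 = n - k * l ∧ p.1.parts k = 0 ∧ p.2.parts 0 ≤ l} :=
        Nat.card_congr (Equiv.subtypeEquivRight (fun p => by omega))
      rw [e2, PartitionAux.card_pairs]
      push_cast
      simp only [PartitionAux.cA, PartitionAux.cB]
    · rw [if_neg h, hcard]
      haveI : IsEmpty {p : PartsPartition × PartsPartition //
          (psize p.1 + psize p.2) + k * l = n ∧ p.1.parts k = 0 ∧ p.2.parts 0 ≤ l} :=
        ⟨fun x => absurd x.2.1 (by omega)⟩
      rw [Nat.card_of_isEmpty]
      simp
  rw [key]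
  have hA := PartitionAux.mk_cA_prod k
  have hB := PartitionAux.mk_cB_prod l
  calc (X : PowerSeries ℚ) ^ (k * l) *
        (PowerSeries.mk (PartitionAux.cA k) * PowerSeries.mk (PartitionAux.cB l)) *
        (∏ i ∈ Finset.range k, (1 - (X : PowerSeries ℚ) ^ (i + 1))) *
        (∏ j ∈ Finset.range l, (1 - (X : PowerSeries ℚ) ^ (j + 1)))
      = (X : PowerSeries ℚ) ^ (k * l) *
          ((PowerSeries.mk (PartitionAux.cA k) *
              ∏ i ∈ Finset.range k, (1 - (X : PowerSeries ℚ) ^ (i + 1))) *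
           (PowerSeries.mk (PartitionAux.cB l) *
              ∏ j ∈ Finset.range l, (1 - (X : PowerSeries ℚ) ^ (j + 1)))) := by ring
    _ = (X : PowerSeries ℚ) ^ (k * l) * (1 * 1) := by rw [hA, hB]
    _ = (X : PowerSeries ℚ) ^ (k * l) := by ring
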